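/- Let q be a prime and n ≥ 1. The set M = { P·((a−b)Iₙ + bJₙ) : P an n×n permutation matrix, a, b ∈ F_q, a ≠ b, a ≠ (1−n)b } is a subgroup of GL(n,q). -/

import Mathlib

/-!
Permutation matrices commute with `I` and `J`, and `J² = nJ`, so the product of `P·D(a, b)` and
`P'·D(c, d)`, where `D(a, b) = (a - b)I + bJ`, is `PP'·D(e, f)` with `e - f = (a - b)(c - d)` and
`e + (n - 1)f = (a + (n - 1)b)(c + (n - 1)d)`: both nondegeneracy conditions are multiplicative.
In the finite group `GL(n, q)` a set containing `1` and closed under products is a subgroup.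
-/

open Matrix

/-- `x⁻¹` is a positive power of `x` in a finite group, so a submonoid is closed under
inversion. -/
def Submonoid.toSubgroupOfFinite {G : Type*} [Group G] [Finite G] (S : Submonoid G) :
    Subgroup G where
  toSubmonoid := S
  inv_mem' {x} hx :=
    Submonoid.powers_le.2 hx (mem_powers_iff_mem_zpowers.2 (inv_mem (Subgroup.mem_zpowers x)))

@[simp]
theorem Submonoid.mem_toSubgroupOfFinite {G : Type*} [Group G] [Finite G] (S : Submonoid G)
    {x : G} : x ∈ S.toSubgroupOfFinite ↔ x ∈ S :=
  Iff.rfl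

namespace Matrix

variable {ι R : Type*}

theorem permMatrix_eq_of [DecidableEq ι] [Zero R] [One R] (σ : Equiv.Perm ι) :
    σ.permMatrix R = of fun i j => if σ i = j then 1 else 0 := by
  ext i j
  simp [PEquiv.toMatrix_apply]

theorem allOnes_mul_allOnes [Fintype ι] [CommRing R] :
    (of fun _ _ => 1 : Matrix ι ι R) * of (fun _ _ => 1) =
      (Fintype.card ι : R) • of fun _ _ => 1 := by
  ext i j
  simp [mul_apply]

theorem commute_permMatrix_allOnes [Fintype ι] [DecidableEq ι] [CommRing R]
    (σ : Equiv.Perm ι) : Commute (σ.permMatrix R) (of fun _ _ => 1) := by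
  show _ * _ = _ * _
  rw [PEquiv.toMatrix_toPEquiv_mul, PEquiv.mul_toMatrix_toPEquiv]
  rfl

/-- The matrix with `a` on the diagonal and `b` off it. -/
def diagOffDiag [DecidableEq ι] [CommRing R] (a b : R) : Matrix ι ι R :=
  (a - b) • 1 + b • of fun _ _ => 1

section

variable [Fintype ι] [DecidableEq ι] [CommRing R]

theorem commute_permMatrix_diagOffDiag (σ : Equiv.Perm ι) (a b : R) :
    Commute (σ.permMatrix R) (diagOffDiag a b) :=
  ((Commute.one_right _).smul_right _).add_right ((commute_permMatrix_allOnes σ).smul_right _)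

theorem diagOffDiag_mul_diagOffDiag (a b c d : R) :
    (diagOffDiag a b * diagOffDiag c d : Matrix ι ι R) =
      let f := (a - b) * d + b * (c - d) + Fintype.card ι * b * d
      diagOffDiag ((a - b) * (c - d) + f) f := by
  simp only [diagOffDiag, mul_add, add_mul, Matrix.smul_mul, Matrix.mul_smul, one_mul, mul_one,
    allOnes_mul_allOnes, smul_smul]
  module

variable (ι R) [IsDomain R]

def permDiagOffDiagSubmonoid : Submonoid (Matrix ι ι R) where
  carrier := {A | ∃ (σ : Equiv.Perm ι) (a b : R), a ≠ b ∧ a ≠ (1 - Fintype.card ι) * b ∧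
    A = σ.permMatrix R * diagOffDiag a b}
  one_mem' := ⟨1, 1, 0, one_ne_zero, by simp, by simp [diagOffDiag]⟩
  mul_mem' := by
    rintro _ _ ⟨σ, a, b, hab, hab', rfl⟩ ⟨τ, c, d, hcd, hcd', rfl⟩
    let f := (a - b) * d + b * (c - d) + Fintype.card ι * b * d
    refine ⟨τ * σ, (a - b) * (c - d) + f, f, ?_, ?_, ?_⟩
    · rw [← sub_ne_zero]
      convert mul_ne_zero (sub_ne_zero.2 hab) (sub_ne_zero.2 hcd) using 1
      ring
    · rw [← sub_ne_zero]
      convert mul_ne_zero (sub_ne_zero.2 hab') (sub_ne_zero.2 hcd') using 1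
      ring
    · rw [permMatrix_mul, ← diagOffDiag_mul_diagOffDiag, mul_assoc, ← mul_assoc (diagOffDiag a b),
        ← (commute_permMatrix_diagOffDiag τ a b).eq]
      simp only [mul_assoc]

end

end Matrix

theorem stmt9_general (q n : ℕ) [Fact (Nat.Prime q)] :
    ∃ H : Subgroup (GL (Fin n) (ZMod q)),
      ∀ A : GL (Fin n) (ZMod q), A ∈ H ↔
        ∃ (σ : Equiv.Perm (Fin n)) (a b : ZMod q),
          a ≠ b ∧ a ≠ (1 - (n : ZMod q)) * b ∧
          (A : Matrix (Fin n) (Fin n) (ZMod q)) =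
            (Matrix.of fun i j => if σ i = j then (1 : ZMod q) else 0) *
              ((a - b) • (1 : Matrix (Fin n) (Fin n) (ZMod q)) +
                b • Matrix.of fun _ _ => (1 : ZMod q)) := by
  refine ⟨((permDiagOffDiagSubmonoid (Fin n) (ZMod q)).comap (Units.coeHom _)).toSubgroupOfFinite,
    fun A => ?_⟩
  simp [permDiagOffDiagSubmonoid, diagOffDiag, permMatrix_eq_of]

theorem stmt9 (q n : ℕ) [Fact (Nat.Prime q)] (hn : 1 ≤ n) :
    ∃ H : Subgroup (GL (Fin n) (ZMod q)),
      ∀ A : GL (Fin n) (ZMod q), A ∈ H ↔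
        ∃ (σ : Equiv.Perm (Fin n)) (a b : ZMod q),
          a ≠ b ∧ a ≠ (1 - (n : ZMod q)) * b ∧
          (A : Matrix (Fin n) (Fin n) (ZMod q)) =
            (Matrix.of fun i j => if σ i = j then (1 : ZMod q) else 0) *
              ((a - b) • (1 : Matrix (Fin n) (Fin n) (ZMod q)) +
                b • Matrix.of fun _ _ => (1 : ZMod q)) :=
  stmt9_general q n
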